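/- Let G be a finite connected simple graph that is {K1 ∪ K3, C4}-free and contains a triangle. Let T be the set of vertices of G that lie on some triangle. Then every vertex of G not in T has exactly one neighbor in T. -/

import Mathlib

open SimpleGraph

/-- `G` is `H`-free: no induced subgraph of `G` is isomorphic to `H`
(an induced copy is a graph embedding). -/
def InducedFree {α β : Type*} (H : SimpleGraph β) (G : SimpleGraph α) : Prop :=
  ¬ Nonempty (H ↪g G)

/-- `K1 ∪ K3`: a triangle `1,2,3` together with the isolated vertex `0`
(the complement of the claw). -/
def K1uK3 : SimpleGraph (Fin 4) := fromEdgeSet {s(1,2), s(1,3), s(2,3)}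

/-- The cycle on four vertices. -/
def C4 : SimpleGraph (Fin 4) := fromEdgeSet {s(0,1), s(1,2), s(2,3), s(3,0)}

/-- The set of vertices of `G` lying on a triangle. -/
def triangleVertices {V : Type*} (G : SimpleGraph V) : Set V :=
  {v | ∃ x y : V, G.Adj v x ∧ G.Adj v y ∧ G.Adj x y}

/-!
A vertex `v` on no triangle sees a vertex of every triangle, since otherwise `v` and the triangle
would induce `K1 ∪ K3`; this gives a neighbour `t₁` of `v` on a triangle `t₁ a b`. In fact
`v` has no other neighbour `t₂`: it would be non-adjacent to `t₁` because `v` is on no triangle,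
yet it must see `t₁`, `a` or `b`; if it sees `a`, say, then `v t₁ a t₂` is an induced `C4`.
-/

section

variable {V : Type*} {G : SimpleGraph V}

lemma nonempty_K1uK3_embedding {w x y z : V}
    (hxy : G.Adj x y) (hxz : G.Adj x z) (hyz : G.Adj y z)
    (hwx : ¬G.Adj w x) (hwy : ¬G.Adj w y) (hwz : ¬G.Adj w z)
    (hx : w ≠ x) (hy : w ≠ y) (hz : w ≠ z) : Nonempty (K1uK3 ↪g G) := by
  have hxw : ¬G.Adj x w := fun h => hwx h.symm
  have hyw : ¬G.Adj y w := fun h => hwy h.symm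
  have hzw : ¬G.Adj z w := fun h => hwz h.symm
  have hx' := hx.symm; have hy' := hy.symm; have hz' := hz.symm
  refine ⟨⟨![w, x, y, z], ?_⟩, ?_⟩
  · intro i j
    fin_cases i <;> fin_cases j <;>
      simp_all [hxy.ne, hxz.ne, hyz.ne, hxy.ne', hxz.ne', hyz.ne']
  · intro i j
    fin_cases i <;> fin_cases j <;>
      simp_all [DFunLike.coe, K1uK3, hxy.symm, hxz.symm, hyz.symm]

lemma nonempty_C4_embedding {a b c d : V}
    (hab : G.Adj a b) (hbc : G.Adj b c) (hcd : G.Adj c d) (hda : G.Adj d a)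
    (hac : ¬G.Adj a c) (hbd : ¬G.Adj b d) (hac' : a ≠ c) (hbd' : b ≠ d) :
    Nonempty (C4 ↪g G) := by
  have hca : ¬G.Adj c a := fun h => hac h.symm
  have hdb : ¬G.Adj d b := fun h => hbd h.symm
  have hca' := hac'.symm; have hdb' := hbd'.symm
  refine ⟨⟨![a, b, c, d], ?_⟩, ?_⟩
  · intro i j
    fin_cases i <;> fin_cases j <;>
      simp_all [hab.ne, hbc.ne, hcd.ne, hda.ne, hab.ne', hbc.ne', hcd.ne', hda.ne']
  · intro i j
    fin_cases i <;> fin_cases j <;>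
      simp_all [DFunLike.coe, C4, hab.symm, hbc.symm, hcd.symm, hda.symm]

lemma adj_triangle_of_K1uK3_free (hK : InducedFree K1uK3 G) {w x y z : V}
    (hxy : G.Adj x y) (hxz : G.Adj x z) (hyz : G.Adj y z)
    (hx : w ≠ x) (hy : w ≠ y) (hz : w ≠ z) : G.Adj w x ∨ G.Adj w y ∨ G.Adj w z := by
  by_contra! hw
  exact hK (nonempty_K1uK3_embedding hxy hxz hyz hw.1 hw.2.1 hw.2.2 hx hy hz)

lemma mem_triangleVertices_of_adj {x y z : V} (hxy : G.Adj x y) (hxz : G.Adj x z)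
    (hyz : G.Adj y z) : x ∈ triangleVertices G :=
  ⟨y, z, hxy, hxz, hyz⟩

lemma not_adj_of_notMem_triangleVertices {v x y : V} (hv : v ∉ triangleVertices G)
    (hx : G.Adj v x) (hy : G.Adj v y) : ¬G.Adj x y :=
  fun hxy => hv ⟨x, y, hx, hy, hxy⟩

lemma not_adj_of_C4_free (hC : InducedFree C4 G) {v t₁ t₂ a : V}
    (hv : v ∉ triangleVertices G) (hvt₁ : G.Adj v t₁) (hvt₂ : G.Adj v t₂) (hne : t₁ ≠ t₂)
    (ha : a ∈ triangleVertices G) (ht₁a : G.Adj t₁ a) : ¬G.Adj t₂ a := by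
  intro ht₂a
  have hva : ¬G.Adj v a := fun hva => not_adj_of_notMem_triangleVertices hv hvt₁ hva ht₁a
  exact hC (nonempty_C4_embedding hvt₁ ht₁a ht₂a.symm hvt₂.symm hva
    (not_adj_of_notMem_triangleVertices hv hvt₁ hvt₂) (ne_of_mem_of_not_mem ha hv).symm hne)

lemma exists_adj_mem_triangleVertices (hK : InducedFree K1uK3 G) (htri : ¬G.CliqueFree 3)
    {v : V} (hv : v ∉ triangleVertices G) : ∃ t ∈ triangleVertices G, G.Adj v t := by
  classical
  obtain ⟨s, hs⟩ := not_forall_not.mp htri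
  obtain ⟨x, y, z, hxy, hxz, hyz, -⟩ := is3Clique_iff.mp hs
  have hx := mem_triangleVertices_of_adj hxy hxz hyz
  have hy := mem_triangleVertices_of_adj hxy.symm hyz hxz
  have hz := mem_triangleVertices_of_adj hxz.symm hyz.symm hxy
  rcases adj_triangle_of_K1uK3_free hK hxy hxz hyz (ne_of_mem_of_not_mem hx hv).symm
      (ne_of_mem_of_not_mem hy hv).symm (ne_of_mem_of_not_mem hz hv).symm with h | h | h
  exacts [⟨x, hx, h⟩, ⟨y, hy, h⟩, ⟨z, hz, h⟩]

lemma eq_of_adj_of_adj_mem_triangleVertices (hK : InducedFree K1uK3 G) (hC : InducedFree C4 G)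
    {v t₁ t₂ : V} (hv : v ∉ triangleVertices G)
    (ht₁ : t₁ ∈ triangleVertices G) (hvt₁ : G.Adj v t₁) (hvt₂ : G.Adj v t₂) : t₁ = t₂ := by
  by_contra hne
  have ht₁₂ := not_adj_of_notMem_triangleVertices hv hvt₁ hvt₂
  obtain ⟨a, b, ha, hb, hab⟩ := ht₁
  have ht₂a : t₂ ≠ a := by rintro rfl; exact ht₁₂ ha
  have ht₂b : t₂ ≠ b := by rintro rfl; exact ht₁₂ hb
  rcases adj_triangle_of_K1uK3_free hK ha hb hab (Ne.symm hne) ht₂a ht₂b with h | h | h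
  · exact ht₁₂ h.symm
  · exact not_adj_of_C4_free hC hv hvt₁ hvt₂ hne
      (mem_triangleVertices_of_adj ha.symm hab hb) ha h
  · exact not_adj_of_C4_free hC hv hvt₁ hvt₂ hne
      (mem_triangleVertices_of_adj hb.symm hab.symm ha) hb h

end

theorem coclaw_C4_free_unique_triangle_neighbor_general {V : Type*}
    (G : SimpleGraph V)
    (hK1uK3 : InducedFree K1uK3 G) (hC4 : InducedFree C4 G)
    (htriangle : ¬ G.CliqueFree 3) :
    ∀ v : V, v ∉ triangleVertices G →
      ∃! t : V, t ∈ triangleVertices G ∧ G.Adj v t := by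
  intro v hv
  obtain ⟨t, ht, hvt⟩ := exists_adj_mem_triangleVertices hK1uK3 htriangle hv
  exact ⟨t, ⟨ht, hvt⟩, fun s ⟨_, hvs⟩ =>
    (eq_of_adj_of_adj_mem_triangleVertices hK1uK3 hC4 hv ht hvt hvs).symm⟩

theorem coclaw_C4_free_unique_triangle_neighbor {V : Type*} [Fintype V]
    (G : SimpleGraph V) (hconn : G.Connected)
    (hK1uK3 : InducedFree K1uK3 G) (hC4 : InducedFree C4 G)
    (htriangle : ¬ G.CliqueFree 3) :
    ∀ v : V, v ∉ triangleVertices G →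
      ∃! t : V, t ∈ triangleVertices G ∧ G.Adj v t :=
  coclaw_C4_free_unique_triangle_neighbor_general G hK1uK3 hC4 htriangle
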